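/- For any real c ≠ 0, let γ̄ = 1/√(1 + c²). Then the function u(x,t) = 4·arctan(c^{−1}·sin(γ̄ c t)·sech(γ̄ x)) satisfies the sine-Gordon equation ∂²u/∂t² = ∂²u/∂x² − sin(u) for all real x and t. -/

import Mathlib

/-! Lamb's separable ansatz: for `u = 4 arctan (g(t) f(x))`, the sine-Gordon equation reduces to a
polynomial identity as soon as `f'² = k f⁴ + m f² + n` and `g'² = -n g⁴ + (m - 1) g² - k`
(with the matching second-order equations). The breather is the case `f = sech (γ̄ x)`,
`g = c⁻¹ sin (γ̄ c t)`, where `k = -γ̄²`, `m = γ̄²`, `n = 0`, and `γ̄² (1 + c²) = 1` gives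
`m - 1 = -γ̄² c²`. -/

open Real

lemma sin_four_arctan (a : ℝ) :
    sin (4 * arctan a) = 4 * a * (1 - a ^ 2) / (1 + a ^ 2) ^ 2 := by
  have hsin : sin (arctan a) = a * cos (arctan a) := by
    rw [sin_arctan, cos_arctan]; ring
  calc sin (4 * arctan a)
      = 4 * sin (arctan a) * cos (arctan a) * (cos (arctan a) ^ 2 - sin (arctan a) ^ 2) := by
        rw [show 4 * arctan a = 2 * (2 * arctan a) by ring, sin_two_mul, sin_two_mul, cos_two_mul,
          cos_sq']
        ring
    _ = 4 * a * (1 - a ^ 2) * (cos (arctan a) ^ 2) ^ 2 := by rw [hsin]; ring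
    _ = 4 * a * (1 - a ^ 2) / (1 + a ^ 2) ^ 2 := by rw [cos_sq_arctan]; field_simp

lemma deriv_deriv_four_arctan {φ φ' : ℝ → ℝ} {φ'' x : ℝ}
    (hφ : ∀ y, HasDerivAt φ (φ' y) y) (hφ' : HasDerivAt φ' φ'' x) :
    deriv (deriv fun y => 4 * arctan (φ y)) x =
      4 * (φ'' * (1 + φ x ^ 2) - 2 * φ x * φ' x ^ 2) / (1 + φ x ^ 2) ^ 2 := by
  have hfirst : deriv (fun y => 4 * arctan (φ y)) = fun y => 4 * φ' y / (1 + φ y ^ 2) := by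
    funext y
    refine (((hφ y).arctan.const_mul 4).congr_deriv ?_).deriv
    field_simp
  have hden : HasDerivAt (fun y => 1 + φ y ^ 2) (2 * φ x * φ' x) x := by
    simpa using ((hφ x).fun_pow 2).const_add 1
  rw [hfirst]
  refine ((hφ'.const_mul 4).div hden (by positivity)).deriv.trans ?_
  ring

theorem sineGordon_four_arctan_mul {f f' g g' : ℝ → ℝ} {k m n x t : ℝ}
    (hf : ∀ y, HasDerivAt f (f' y) y) (hf' : HasDerivAt f' (2 * k * f x ^ 3 + m * f x) x)
    (hg : ∀ s, HasDerivAt g (g' s) s)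
    (hg' : HasDerivAt g' (-2 * n * g t ^ 3 + (m - 1) * g t) t)
    (hf_sq : f' x ^ 2 = k * f x ^ 4 + m * f x ^ 2 + n)
    (hg_sq : g' t ^ 2 = -n * g t ^ 4 + (m - 1) * g t ^ 2 - k) :
    deriv (deriv fun s => 4 * arctan (g s * f x)) t =
      deriv (deriv fun y => 4 * arctan (g t * f y)) x - sin (4 * arctan (g t * f x)) := by
  rw [deriv_deriv_four_arctan (fun s => (hg s).mul_const (f x)) (hg'.mul_const (f x)),
    deriv_deriv_four_arctan (fun y => (hf y).const_mul (g t)) (hf'.const_mul (g t)),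
    sin_four_arctan, div_sub_div_same]
  congr 1
  linear_combination (8 * g t * f x) * (g t ^ 2 * hf_sq - f x ^ 2 * hg_sq)

section Sech

variable (k y : ℝ)

lemma hasDerivAt_one_div_cosh_mul :
    HasDerivAt (fun y => 1 / cosh (k * y)) (-k * sinh (k * y) / cosh (k * y) ^ 2) y := by
  simp only [one_div]
  exact ((hasDerivAt_const_mul k).cosh.inv (cosh_pos _).ne').congr_deriv (by ring)

lemma hasDerivAt_sinh_div_cosh_sq_mul :
    HasDerivAt (fun y => -k * sinh (k * y) / cosh (k * y) ^ 2)
      (k ^ 2 * (1 / cosh (k * y) - 2 * (1 / cosh (k * y)) ^ 3)) y := by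
  have hlin : HasDerivAt (fun y => k * y) k y := hasDerivAt_const_mul k
  refine ((hlin.sinh.const_mul (-k)).div (hlin.cosh.fun_pow 2) (by positivity)).congr_deriv ?_
  have hne : cosh (k * y) ≠ 0 := (cosh_pos _).ne'
  field_simp
  linear_combination (2 * k ^ 2 * cosh (k * y)) * sinh_sq (k * y)

lemma sq_sinh_div_cosh_sq_mul :
    (-k * sinh (k * y) / cosh (k * y) ^ 2) ^ 2 =
      k ^ 2 * ((1 / cosh (k * y)) ^ 2 - (1 / cosh (k * y)) ^ 4) := by
  have hne : cosh (k * y) ≠ 0 := (cosh_pos _).ne'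
  field_simp
  linear_combination k ^ 2 * sinh_sq (k * y)

end Sech

theorem sine_gordon_breather_solution
    (c : ℝ) (hc : c ≠ 0) (γ : ℝ) (hγ : γ = 1 / Real.sqrt (1 + c ^ 2))
    (u : ℝ → ℝ → ℝ)
    (hu : ∀ x t, u x t = 4 * arctan (c⁻¹ * Real.sin (γ * c * t) * (1 / Real.cosh (γ * x)))) :
    ∀ x t : ℝ,
      deriv (deriv (fun s => u x s)) t =
        deriv (deriv (fun y => u y t)) x - Real.sin (u x t) := by
  intro x t
  have hγc : γ ^ 2 * (1 + c ^ 2) = 1 := by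
    rw [hγ, div_pow, sq_sqrt (by positivity)]
    field_simp
  obtain rfl : u = fun x t => 4 * arctan (c⁻¹ * sin (γ * c * t) * (1 / cosh (γ * x))) :=
    funext₂ hu
  refine sineGordon_four_arctan_mul (k := -γ ^ 2) (m := γ ^ 2) (n := 0)
    (g' := fun s => γ * cos (γ * c * s)) (hasDerivAt_one_div_cosh_mul γ)
    ((hasDerivAt_sinh_div_cosh_sq_mul γ x).congr_deriv (by ring))
    (fun s => ((hasDerivAt_const_mul (γ * c)).sin.const_mul c⁻¹).congr_deriv ?_)
    (((hasDerivAt_const_mul (γ * c)).cos.const_mul γ).congr_deriv ?_)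
    (by rw [sq_sinh_div_cosh_sq_mul]; ring) ?_
  · field_simp
  · field_simp
    linear_combination -c ^ 2 * sin (γ * c * t) * hγc
  · field_simp
    linear_combination
      γ ^ 2 * c ^ 4 * sin_sq_add_cos_sq (γ * c * t) - c ^ 2 * sin (γ * c * t) ^ 2 * hγc
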